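/- There exist a constant C₂ > 0 and R₀ > 0 such that for every R ≥ R₀: if t*_R ∈ (0, t₁(R)) is the first time at which θ_R(t*_R) = −π/2 (equivalently, the time at which x_R attains its maximum along the arc where −π ≤ θ_R ≤ 0), then x_R(t*_R) ≤ C₂/R; moreover r_R(t*_R) → +∞ as R → +∞. -/
import Mathlib

open Set Real Filter Topology

/-- If `g` has nonnegative derivative on `[a,b]`, it is monotone there. -/
lemma mono_of_deriv' {g g' : ℝ → ℝ} {a b : ℝ}
    (hg : ∀ t ∈ Set.Icc a b, HasDerivAt g (g' t) t)
    (h : ∀ t ∈ Set.Icc a b, 0 ≤ g' t) :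
    MonotoneOn g (Set.Icc a b) := by
  apply monotoneOn_of_deriv_nonneg (convex_Icc a b)
  · exact fun t ht => (hg t ht).continuousAt.continuousWithinAt
  · intro t ht
    rw [interior_Icc] at ht
    exact ((hg t (Ioo_subset_Icc_self ht)).differentiableAt).differentiableWithinAt
  · intro t ht
    rw [interior_Icc] at ht
    rw [(hg t (Ioo_subset_Icc_self ht)).deriv]
    exact h t (Ioo_subset_Icc_self ht)

/-- First hitting time of the closed level set `{g ≤ c}`. -/
lemma first_hit {g : ℝ → ℝ} {u c : ℝ}
    (hc : ContinuousOn g (Set.Icc 0 u)) (h0 : c < g 0)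
    (h1 : ∃ t ∈ Set.Icc 0 u, g t ≤ c) :
    ∃ t₀ ∈ Set.Ioc 0 u, g t₀ = c ∧ ∀ t ∈ Set.Ico 0 t₀, c < g t := by
  set S : Set ℝ := Set.Icc 0 u ∩ g ⁻¹' (Set.Iic c) with hS
  have hSclosed : IsClosed S := hc.preimage_isClosed_of_isClosed isClosed_Icc isClosed_Iic
  obtain ⟨a, ha, hga⟩ := h1
  have hSne : S.Nonempty := ⟨a, ha, hga⟩
  have hSbdd : BddBelow S := ⟨0, fun t ht => ht.1.1⟩
  set t₀ := sInf S with ht₀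
  have ht₀S : t₀ ∈ S := hSclosed.csInf_mem hSne hSbdd
  have ht₀Icc : t₀ ∈ Set.Icc 0 u := ht₀S.1
  have hgt₀ : g t₀ ≤ c := ht₀S.2
  have ht₀pos : 0 < t₀ := by
    rcases lt_or_eq_of_le ht₀Icc.1 with h | h
    · exact h
    · exact absurd hgt₀ (by rw [← h]; exact not_le.2 h0)
  have hmin : ∀ t ∈ Set.Ico 0 t₀, c < g t := by
    intro t ht
    by_contra hle
    exact absurd (csInf_le hSbdd ⟨⟨ht.1, le_trans ht.2.le ht₀Icc.2⟩, not_lt.1 hle⟩)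
      (not_le.2 ht.2)
  refine ⟨t₀, ⟨ht₀pos, ht₀Icc.2⟩, le_antisymm hgt₀ ?_, hmin⟩
  have hne : (𝓝[Set.Ioo 0 t₀] t₀).NeBot := right_nhdsWithin_Ioo_neBot ht₀pos
  have htends : Filter.Tendsto g (𝓝[Set.Ioo 0 t₀] t₀) (𝓝 (g t₀)) :=
    (hc.continuousWithinAt ht₀Icc).mono
      (fun t ht => ⟨ht.1.le, le_trans ht.2.le ht₀Icc.2⟩)
  exact ge_of_tendsto htends (Filter.eventually_of_mem self_mem_nhdsWithin
    (fun t ht => (hmin t ⟨ht.1.le, ht.2⟩).le))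

/-- The arc-length system (1.5): `x' = cos θ`, `r' = sin θ`,
`θ' = ((n-1)/r - (r/2) f'(x²+r²)) cos θ + (x/2) f'(x²+r²) sin θ` on the set `s`. -/
def SolvesSystem (n : ℕ) (f : ℝ → ℝ) (x r θ : ℝ → ℝ) (s : Set ℝ) : Prop :=
  ∀ t ∈ s,
    HasDerivAt x (Real.cos (θ t)) t ∧
    HasDerivAt r (Real.sin (θ t)) t ∧
    HasDerivAt θ
      ((((n : ℝ) - 1) / r t - r t / 2 * deriv f (x t ^ 2 + r t ^ 2)) * Real.cos (θ t)
        + x t / 2 * deriv f (x t ^ 2 + r t ^ 2) * Real.sin (θ t)) t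

/-- None of the exit events `θ = 0`, `θ = -π`, `x = 0`, `r = 0` occurs on `s`. -/
def NoExit (x r θ : ℝ → ℝ) (s : Set ℝ) : Prop :=
  ∀ t ∈ s, θ t ≠ 0 ∧ θ t ≠ -Real.pi ∧ x t ≠ 0 ∧ r t ≠ 0

/-- `t*` is the first time in `(0, T)` (before the first exit time) at which `θ = -π/2`,
for the solution of (1.5) with initial condition (1.6) at height `R`. -/
def FirstVerticalTime (n : ℕ) (f : ℝ → ℝ) (R : ℝ) (x r θ : ℝ → ℝ) (T tstar : ℝ) : Prop :=
  x 0 = 0 ∧ r 0 = R ∧ θ 0 = 0 ∧ 0 < T ∧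
  SolvesSystem n f x r θ (Set.Icc 0 T) ∧
  NoExit x r θ (Set.Ioo 0 T) ∧
  tstar ∈ Set.Ioo 0 T ∧ θ tstar = -(Real.pi / 2) ∧
  ∀ t ∈ Set.Ioo 0 tstar, θ t ≠ -(Real.pi / 2)

set_option maxHeartbeats 4000000 in
/-- At the first time `t*_R` where `θ_R = -π/2` (where `x_R` attains its maximum on the
first arc), `x_R(t*_R) ≤ C₂/R`; moreover `r_R(t*_R) → +∞` as `R → +∞`. -/
theorem maximum_point_estimate
    (n : ℕ) (hn : 2 ≤ n) (m M : ℝ) (hm : 0 < m) (hmM : m ≤ M)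
    (f : ℝ → ℝ) (hf : ContDiff ℝ 2 f)
    (hconv : ∀ s : ℝ, 0 ≤ deriv (deriv f) s)
    (hlow : ∀ s : ℝ, m ≤ deriv f s) (hup : ∀ s : ℝ, deriv f s ≤ M) :
    ∃ C₂ R₀ : ℝ, 0 < C₂ ∧ 0 < R₀ ∧
      (∀ R : ℝ, R₀ ≤ R →
        ∀ x r θ : ℝ → ℝ, ∀ T tstar : ℝ,
          FirstVerticalTime n f R x r θ T tstar → x tstar ≤ C₂ / R) ∧
      (∀ K : ℝ, ∃ R₁ : ℝ, R₀ ≤ R₁ ∧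
        ∀ R : ℝ, R₁ ≤ R →
          ∀ x r θ : ℝ → ℝ, ∀ T tstar : ℝ,
            FirstVerticalTime n f R x r θ T tstar → K ≤ r tstar) := by
  have hπ := Real.pi_pos
  have hM : 0 < M := lt_of_lt_of_le hm hmM
  set C₂ : ℝ := 4 * π / m with hC₂def
  set R₀ : ℝ := 4 + 4*π/m + 4096/m^2 + 8*M/m + 16*(n:ℝ)/m with hR₀def
  have hC₂ : 0 < C₂ := by positivity
  have hn' : (0:ℝ) < (n:ℝ) := by positivity
  have hR₀ : 0 < R₀ := by positivity
  have key : ∀ R, R₀ ≤ R → ∀ x r θ : ℝ → ℝ, ∀ T tstar : ℝ,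
      FirstVerticalTime n f R x r θ T tstar → x tstar ≤ C₂ / R ∧ R - 1 ≤ r tstar := by
    intro R hR x r θ T tstar hFVT
    obtain ⟨hx0, hr0, hθ0, hT, hsys, hnoexit, hts, hθts, hfirst⟩ := hFVT
    -- basic facts about R
    have hp1 : (0:ℝ) ≤ 4*π/m := by positivity
    have hp2 : (0:ℝ) ≤ 4096/m^2 := by positivity
    have hp3 : (0:ℝ) ≤ 8*M/m := by positivity
    have hp4 : (0:ℝ) ≤ 16*(n:ℝ)/m := by positivity
    have hR4 : (4:ℝ) ≤ R := by rw [hR₀def] at hR; linarith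
    have hR1 : (1:ℝ) ≤ R := by linarith
    have hRpos : (0:ℝ) < R := by linarith
    have hRm : 4*π/m ≤ R := by rw [hR₀def] at hR; linarith
    have hRlog : 4096/m^2 ≤ R := by rw [hR₀def] at hR; linarith
    have hRM : 8*M/m ≤ R := by rw [hR₀def] at hR; linarith
    have hRn : 16*(n:ℝ)/m ≤ R := by rw [hR₀def] at hR; linarith
    have hRne : R ≠ 0 := ne_of_gt hRpos
    have hmne : m ≠ 0 := ne_of_gt hm
    have hMne : M ≠ 0 := ne_of_gt hM
    have hπne : π ≠ 0 := ne_of_gt hπ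
    have htspos : 0 < tstar := hts.1
    have htsT : tstar < T := hts.2
    have hI : Set.Icc 0 tstar ⊆ Set.Icc 0 T :=
      Set.Icc_subset_Icc le_rfl htsT.le
    set d : ℝ → ℝ := fun t => deriv f (x t ^ 2 + r t ^ 2) with hddef
    set A : ℝ → ℝ := fun t => ((n : ℝ) - 1) / r t - r t / 2 * d t with hAdef
    set θ' : ℝ → ℝ := fun t => A t * Real.cos (θ t) + x t / 2 * d t * Real.sin (θ t)
      with hθ'def
    have hdm : ∀ t, m ≤ d t := fun t => hlow _
    have hdM : ∀ t, d t ≤ M := fun t => hup _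
    have hxD : ∀ t ∈ Set.Icc 0 T, HasDerivAt x (Real.cos (θ t)) t :=
      fun t ht => (hsys t ht).1
    have hrD : ∀ t ∈ Set.Icc 0 T, HasDerivAt r (Real.sin (θ t)) t :=
      fun t ht => (hsys t ht).2.1
    have hθD : ∀ t ∈ Set.Icc 0 T, HasDerivAt θ (θ' t) t := fun t ht => (hsys t ht).2.2
    have hcontθ : ContinuousOn θ (Set.Icc 0 T) :=
      fun t ht => (hθD t ht).continuousAt.continuousWithinAt
    have hcontr : ContinuousOn r (Set.Icc 0 T) :=
      fun t ht => (hrD t ht).continuousAt.continuousWithinAt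
    -- θ ranges in [-π/2, 0] on [0, tstar]
    have hθle : ∀ t ∈ Set.Icc 0 tstar, θ t ≤ 0 := by
      intro a ha
      by_contra hcon
      push_neg at hcon
      have hat : a ≠ tstar := by
        intro h; rw [h, hθts] at hcon; linarith
      have halt : a < tstar := lt_of_le_of_ne ha.2 hat
      have ha0 : 0 < a := by
        rcases lt_or_eq_of_le ha.1 with h | h
        · exact h
        · rw [← h, hθ0] at hcon; linarith
      have hIVT := intermediate_value_Ioo' (le_of_lt halt)
        (hcontθ.mono (Set.Icc_subset_Icc ha.1 (le_of_lt htsT)))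
      have h0mem : (0:ℝ) ∈ Set.Ioo (θ tstar) (θ a) := by
        rw [hθts]; exact ⟨by linarith, hcon⟩
      obtain ⟨c, hc, hθc⟩ := hIVT h0mem
      exact (hnoexit c ⟨lt_trans ha0 hc.1, lt_trans hc.2 htsT⟩).1 hθc
    have hθge : ∀ t ∈ Set.Icc 0 tstar, -(π/2) ≤ θ t := by
      intro a ha
      by_contra hcon
      push_neg at hcon
      have ha0 : 0 < a := by
        rcases lt_or_eq_of_le ha.1 with h | h
        · exact h
        · rw [← h, hθ0] at hcon; linarith
      have hIVT := intermediate_value_Ioo' ha.1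
        (hcontθ.mono (Set.Icc_subset_Icc le_rfl (le_trans ha.2 htsT.le)))
      have hmem : -(π/2) ∈ Set.Ioo (θ a) (θ 0) := by
        rw [hθ0]; exact ⟨hcon, by linarith⟩
      obtain ⟨c, hc, hθc⟩ := hIVT hmem
      exact hfirst c ⟨hc.1, lt_of_lt_of_le hc.2 ha.2⟩ hθc
    have hcos0 : ∀ t ∈ Set.Icc 0 tstar, 0 ≤ Real.cos (θ t) := by
      intro t ht
      exact Real.cos_nonneg_of_mem_Icc ⟨hθge t ht, by linarith [hθle t ht]⟩
    have hsin0 : ∀ t ∈ Set.Icc 0 tstar, Real.sin (θ t) ≤ 0 := by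
      intro t ht
      have h1 : 0 ≤ Real.sin (-(θ t)) := Real.sin_nonneg_of_nonneg_of_le_pi
        (by linarith [hθle t ht]) (by linarith [hθge t ht])
      rw [Real.sin_neg] at h1; linarith
    -- x is monotone nonnegative, r is antitone with r ≤ R
    have hxmono : MonotoneOn x (Set.Icc 0 tstar) :=
      mono_of_deriv' (fun t ht => hxD t (hI ht)) hcos0
    have hxnonneg : ∀ t ∈ Set.Icc 0 tstar, 0 ≤ x t := by
      intro t ht
      have := hxmono (Set.left_mem_Icc.2 htspos.le) ht ht.1
      rw [hx0] at this; exact this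
    have hrmono : MonotoneOn (fun t => -r t) (Set.Icc 0 tstar) :=
      mono_of_deriv' (g' := fun t => -Real.sin (θ t))
        (fun t ht => (hrD t (hI ht)).neg) (fun t ht => neg_nonneg.2 (hsin0 t ht))
    have hrleR : ∀ t ∈ Set.Icc 0 tstar, r t ≤ R := by
      intro t ht
      have := hrmono (Set.left_mem_Icc.2 htspos.le) ht ht.1
      simp only [neg_le_neg_iff] at this
      rw [hr0] at this; exact this
    -- pointwise bounds on θ'
    have hApos : ∀ t ∈ Set.Icc 0 tstar, R/2 ≤ r t → A t ≤ -(R*m/8) := by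
      intro t ht hrt
      have hr2 : 0 < r t := lt_of_lt_of_le (by linarith) hrt
      have hncast : (2:ℝ) ≤ (n:ℝ) := by exact_mod_cast hn
      have h4 : 16*(n:ℝ) ≤ R * m := by rw [div_le_iff₀ hm] at hRn; linarith
      have h13 : ((n:ℝ)-1) / r t ≤ R*m/8 := by
        rw [div_le_iff₀ hr2]
        nlinarith [mul_le_mul_of_nonneg_right h4 hRpos.le]
      have h2 : R/4 * m ≤ r t / 2 * d t := by nlinarith [hdm t]
      simp only [hAdef]
      linarith
    have hθ'neg : ∀ t ∈ Set.Icc 0 tstar, R/2 ≤ r t →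
        θ' t ≤ -(R*m/8) * Real.cos (θ t) := by
      intro t ht hrt
      have hc := hcos0 t ht
      have hs := hsin0 t ht
      have hx := hxnonneg t ht
      have hA := hApos t ht hrt
      have h1 : A t * Real.cos (θ t) ≤ -(R*m/8) * Real.cos (θ t) :=
        mul_le_mul_of_nonneg_right hA hc
      have h2 : x t / 2 * d t * Real.sin (θ t) ≤ 0 :=
        mul_nonpos_of_nonneg_of_nonpos
          (mul_nonneg (by linarith) (by linarith [hdm t])) hs
      simp only [hθ'def]
      linarith
    have hθ'2 : ∀ t ∈ Set.Icc 0 tstar, R/2 ≤ r t →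
        θ' t ≤ x t / 2 * m * Real.sin (θ t) := by
      intro t ht hrt
      have hc := hcos0 t ht
      have hs := hsin0 t ht
      have hx := hxnonneg t ht
      have hA := hApos t ht hrt
      have h1 : A t * Real.cos (θ t) ≤ 0 :=
        mul_nonpos_of_nonpos_of_nonneg (le_trans hA (by nlinarith)) hc
      have h2 : x t / 2 * d t * Real.sin (θ t) ≤ x t / 2 * m * Real.sin (θ t) := by
        nlinarith [mul_nonneg (mul_nonneg (by linarith : (0:ℝ) ≤ x t / 2)
          (by linarith [hdm t] : (0:ℝ) ≤ d t - m)) (by linarith : (0:ℝ) ≤ -Real.sin (θ t))]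
      have h3 := add_le_add h1 h2
      rw [zero_add] at h3
      simp only [hθ'def]
      exact h3
    have hθ'3 : ∀ t ∈ Set.Icc 0 tstar, R/2 ≤ r t → -(π/4) ≤ θ t → x t ≤ 1 →
        -(M*(R+1)/2) * Real.cos (θ t) ≤ θ' t := by
      intro t ht hrt hθt hx1
      have hc := hcos0 t ht
      have hs := hsin0 t ht
      have hx := hxnonneg t ht
      have hrR := hrleR t ht
      have hr2 : 0 < r t := lt_of_lt_of_le (by linarith) hrt
      have hd := hdm t
      have hd2 := hdM t
      have hncast : (2:ℝ) ≤ (n:ℝ) := by exact_mod_cast hn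
      have hsc : 0 ≤ Real.sin (θ t) + Real.cos (θ t) := by
        have h1 : 0 ≤ Real.sin (θ t + π/4) :=
          Real.sin_nonneg_of_nonneg_of_le_pi (by linarith)
            (by linarith [hθle t ht])
        rw [Real.sin_add, Real.cos_pi_div_four, Real.sin_pi_div_four] at h1
        have h2 : 0 < Real.sqrt 2 := by positivity
        nlinarith
      have hA1 : -(M*R/2) ≤ A t := by
        simp only [hAdef]
        have h1 : 0 ≤ ((n:ℝ)-1) / r t := div_nonneg (by linarith) hr2.le
        have h2 : r t / 2 * d t ≤ R/2 * M := by nlinarith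
        linarith
      have h3 : -(M*R/2) * Real.cos (θ t) ≤ A t * Real.cos (θ t) :=
        mul_le_mul_of_nonneg_right hA1 hc
      have hk : (0:ℝ) ≤ x t / 2 * d t := mul_nonneg (by linarith) (by linarith)
      have hkM : x t / 2 * d t ≤ M / 2 := by nlinarith
      have h4 : -(M/2) * Real.cos (θ t) ≤ x t / 2 * d t * Real.sin (θ t) := by
        nlinarith [mul_nonneg hk hsc, mul_nonneg (sub_nonneg.2 hkM) hc]
      have h5 : -(M*(R+1)/2) * Real.cos (θ t)
          = -(M*R/2) * Real.cos (θ t) + -(M/2) * Real.cos (θ t) := by ring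
      simp only [hθ'def]
      linarith
    -- the core estimate
    have hcore : ∀ u, u ∈ Set.Ioc 0 tstar → (∀ t ∈ Set.Icc 0 u, R/2 ≤ r t) →
        (∀ t ∈ Set.Icc 0 u, x t ≤ 4*π/(m*R)) ∧ R - 1 ≤ r u := by
      intro u hu hrlow
      have huI : Set.Icc 0 u ⊆ Set.Icc 0 tstar := Set.Icc_subset_Icc le_rfl hu.2
      have hc8 : 8/(R*m) * (R*m/8) = 1 := by field_simp
      -- (b) the x bound
      have hxb : ∀ t ∈ Set.Icc 0 u, x t ≤ 4*π/(m*R) := by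
        intro t ht
        have htI : Set.Icc 0 t ⊆ Set.Icc 0 u := Set.Icc_subset_Icc le_rfl ht.2
        have hmono := mono_of_deriv'
          (g := fun s => -(x s + 8/(R*m) * θ s))
          (g' := fun s => -(Real.cos (θ s) + 8/(R*m) * θ' s)) (a := 0) (b := t)
          (fun s hs => ((hxD s (hI (huI (htI hs)))).add
            ((hθD s (hI (huI (htI hs)))).const_mul (8/(R*m)))).neg)
          ?_
        · have h01 := hmono (Set.left_mem_Icc.2 ht.1) (Set.right_mem_Icc.2 ht.1) ht.1
          simp only [hx0, hθ0, mul_zero, add_zero, neg_zero] at h01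
          -- h01 : 0 ≤ -(x t + 8/(R*m) * θ t)
          have hθget := hθge t (huI ht)
          have hcp : (0:ℝ) ≤ 8/(R*m) := by positivity
          have h2 : 8/(R*m) * (-θ t) ≤ 8/(R*m) * (π/2) :=
            mul_le_mul_of_nonneg_left (by linarith) hcp
          have h3 : 8/(R*m) * (π/2) = 4*π/(m*R) := by field_simp; ring
          linarith only [h01, h2, h3]
        · intro s hs
          have hsI := huI (htI hs)
          have hθ's := hθ'neg s hsI (hrlow s (htI hs))
          have h1 : 8/(R*m) * θ' s ≤ 8/(R*m) * (-(R*m/8) * Real.cos (θ s)) :=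
            mul_le_mul_of_nonneg_left hθ's (by positivity)
          have h2 : 8/(R*m) * (-(R*m/8) * Real.cos (θ s)) = -Real.cos (θ s) := by
            field_simp
          rw [h2] at h1
          simp only [neg_nonneg]
          linarith only [h1]
      have h4π : 4*π/(m*R) ≤ 1 := by
        rw [div_le_one (by positivity)]
        have h5 : m * (4*π/m) = 4*π := by field_simp
        have h6 := mul_le_mul_of_nonneg_left hRm hm.le
        linarith only [h5, h6]
      have hx1 : ∀ t ∈ Set.Icc 0 u, x t ≤ 1 :=
        fun t ht => le_trans (hxb t ht) h4π
      have hεpos : (0:ℝ) < 1/R^2 := by positivity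
      -- log-estimate: as long as cos θ stays above ε = 1/R², r drops at most 1/2
      have hG : ∀ v, v ∈ Set.Ioc 0 u → (∀ t ∈ Set.Icc 0 v, 1/R^2 ≤ Real.cos (θ t)) →
          R - 1/2 ≤ r v := by
        intro v hv hcv
        have hvI : Set.Icc 0 v ⊆ Set.Icc 0 u := Set.Icc_subset_Icc le_rfl hv.2
        have hmono := mono_of_deriv'
          (g := fun s => r s - 8/(R*m) * Real.log (Real.cos (θ s)))
          (g' := fun s => Real.sin (θ s)
            - 8/(R*m) * ((Real.cos (θ s))⁻¹ * (-Real.sin (θ s) * θ' s)))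
          (a := 0) (b := v) ?_ ?_
        · have h01 := hmono (Set.left_mem_Icc.2 hv.1.le) (Set.right_mem_Icc.2 hv.1.le)
            hv.1.le
          simp only [hθ0, Real.cos_zero, Real.log_one, mul_zero, sub_zero, hr0] at h01
          -- h01 : R ≤ r v - 8/(R*m) * log (cos (θ v))
          have hcv' := hcv v (Set.right_mem_Icc.2 hv.1.le)
          have hlog1 : Real.log (1/R^2) ≤ Real.log (Real.cos (θ v)) :=
            Real.log_le_log hεpos hcv'
          have hlogε : Real.log (1/R^2) = -(2 * Real.log R) := by
            rw [one_div, Real.log_inv, Real.log_pow]; push_cast; ring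
          have hlogR : Real.log R ≤ 2 * Real.sqrt R := by
            have hsq : (0:ℝ) < Real.sqrt R := Real.sqrt_pos.2 hRpos
            have h1 : Real.log (Real.sqrt R) ≤ Real.sqrt R - 1 :=
              Real.log_le_sub_one_of_pos hsq
            have h2 : Real.log (Real.sqrt R) = Real.log R / 2 := Real.log_sqrt hRpos.le
            linarith only [h1, h2]
          have hsqR : 64/m ≤ Real.sqrt R := by
            rw [show (64:ℝ)/m = Real.sqrt ((64/m)^2) from
              (Real.sqrt_sq (by positivity)).symm]
            apply Real.sqrt_le_sqrt
            have h3 : (64/m)^2 = 4096/m^2 := by ring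
            linarith only [h3, hRlog]
          have hs2 : Real.sqrt R * Real.sqrt R = R := Real.mul_self_sqrt hRpos.le
          have h64 : 64 ≤ Real.sqrt R * m := by
            have h1 := mul_le_mul_of_nonneg_right hsqR hm.le
            have h2 : 64/m*m = 64 := by field_simp
            linarith only [h1, h2]
          have hs2m : Real.sqrt R * Real.sqrt R * m = R * m := by rw [hs2]
          have hRm64 : 64 * Real.sqrt R ≤ R*m := by
            nlinarith only [hs2m, mul_nonneg (Real.sqrt_nonneg R)
              (by linarith only [h64] : (0:ℝ) ≤ Real.sqrt R * m - 64)]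
          have hfinal : 8/(R*m) * (2*Real.log R) ≤ 1/2 := by
            rw [div_mul_eq_mul_div, div_le_iff₀ (by positivity)]
            linarith only [hlogR, hRm64]
          have hcpos : (0:ℝ) ≤ 8/(R*m) := by positivity
          have h5 : 8/(R*m) * Real.log (1/R^2) ≤ 8/(R*m) * Real.log (Real.cos (θ v)) :=
            mul_le_mul_of_nonneg_left hlog1 hcpos
          rw [hlogε] at h5
          linarith only [h01, h5, hfinal]
        · intro s hs
          have hcp : 0 < Real.cos (θ s) := lt_of_lt_of_le hεpos (hcv s hs)
          have hcosD : HasDerivAt (fun w => Real.cos (θ w))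
              (-Real.sin (θ s) * θ' s) s :=
            (Real.hasDerivAt_cos (θ s)).comp s (hθD s (hI (huI (hvI hs))))
          exact (hrD s (hI (huI (hvI hs)))).sub
            (((Real.hasDerivAt_log hcp.ne').comp s hcosD).const_mul (8/(R*m)))
        · intro s hs
          have hsI := huI (hvI hs)
          have hcp : 0 < Real.cos (θ s) := lt_of_lt_of_le hεpos (hcv s hs)
          have hθ's := hθ'neg s hsI (hrlow s (hvI hs))
          have hS : 0 ≤ -Real.sin (θ s) := neg_nonneg.2 (hsin0 s hsI)
          have h1 : -Real.sin (θ s) * θ' s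
              ≤ -Real.sin (θ s) * (-(R*m/8) * Real.cos (θ s)) :=
            mul_le_mul_of_nonneg_left hθ's hS
          have hkey : (Real.cos (θ s))⁻¹ * (-Real.sin (θ s) * θ' s)
              ≤ Real.sin (θ s) * (R*m/8) := by
            have h2 := mul_le_mul_of_nonneg_left h1 (inv_nonneg.2 hcp.le)
            have h3 : (Real.cos (θ s))⁻¹ * (-Real.sin (θ s)
                * (-(R*m/8) * Real.cos (θ s))) = Real.sin (θ s) * (R*m/8) := by
              field_simp
            linarith only [h2, h3]
          have h4 := mul_le_mul_of_nonneg_left hkey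
            (by positivity : (0:ℝ) ≤ 8/(R*m))
          have h5 : 8/(R*m) * (Real.sin (θ s) * (R*m/8)) = Real.sin (θ s) := by
            field_simp
          rw [h5] at h4
          simp only [sub_nonneg]
          exact h4
      by_cases hcase : ∀ t ∈ Set.Icc 0 u, 1/R^2 ≤ Real.cos (θ t)
      · have := hG u ⟨hu.1, le_rfl⟩ hcase
        exact ⟨hxb, by linarith⟩
      · push_neg at hcase
        obtain ⟨b, hb, hcosb⟩ := hcase
        have hcontcos : ContinuousOn (fun t => Real.cos (θ t)) (Set.Icc 0 u) :=
          Real.continuous_cos.comp_continuousOn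
            (hcontθ.mono (fun t ht => hI (huI ht)))
        have hR2big : (1:ℝ)/R^2 < 1 := by
          rw [div_lt_one (by positivity)]; nlinarith only [hR4]
        obtain ⟨tε, htε, hcostε, hminε⟩ := first_hit (c := 1/R^2) hcontcos
          (by rw [hθ0, Real.cos_zero]; exact hR2big) ⟨b, hb, hcosb.le⟩
        have htεu : tε ≤ u := htε.2
        have hrtε : R - 1/2 ≤ r tε := by
          apply hG tε ⟨htε.1, htεu⟩
          intro t ht
          rcases lt_or_eq_of_le ht.2 with h | h
          · exact (hminε t ⟨ht.1, h⟩).le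
          · rw [h, hcostε]
        -- θ tε ≤ -(π/4)
        have hθtε : θ tε ≤ -(π/4) := by
          by_contra hcon
          push_neg at hcon
          have htεI : tε ∈ Set.Icc 0 tstar := huI ⟨htε.1.le, htεu⟩
          have h1 : Real.cos (π/4) ≤ Real.cos (-(θ tε)) :=
            Real.cos_le_cos_of_nonneg_of_le_pi (by linarith [hθle tε htεI])
              (by linarith) (by linarith)
          rw [Real.cos_neg, hcostε, Real.cos_pi_div_four] at h1
          have h2 : (1:ℝ) ≤ Real.sqrt 2 := by
            rw [show (1:ℝ) = Real.sqrt 1 from (Real.sqrt_one).symm]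
            exact Real.sqrt_le_sqrt (by norm_num)
          have h3 : 1/R^2 ≤ 1/16 := by
            rw [div_le_div_iff₀ (by positivity) (by norm_num)]; nlinarith only [hR4]
          linarith only [h1, h2, h3]
        -- first time θ reaches -(π/4)
        obtain ⟨t₁, ht₁, hθt₁, hmin₁⟩ := first_hit (g := θ) (c := -(π/4))
          (hcontθ.mono (fun t ht => hI (huI ⟨ht.1, le_trans ht.2 htεu⟩)))
          (by rw [hθ0]; linarith) ⟨tε, Set.right_mem_Icc.2 htε.1.le, hθtε⟩
        have ht₁u : t₁ ≤ u := le_trans ht₁.2 htεu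
        -- x is at least π/(2M(R+1)) at t₁
        have hcM : 2/(M*(R+1)) * (M*(R+1)/2) = 1 := by
          have : M*(R+1) ≠ 0 := by positivity
          field_simp
        have hxt₁ : π/(2*M*(R+1)) ≤ x t₁ := by
          have hmono₂ := mono_of_deriv'
            (g := fun s => x s + 2/(M*(R+1)) * θ s)
            (g' := fun s => Real.cos (θ s) + 2/(M*(R+1)) * θ' s) (a := 0) (b := t₁)
            (fun s hs => (hxD s (hI (huI ⟨hs.1, le_trans hs.2 ht₁u⟩))).add
              ((hθD s (hI (huI ⟨hs.1, le_trans hs.2 ht₁u⟩))).const_mul (2/(M*(R+1)))))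
            ?_
          · have h01 := hmono₂ (Set.left_mem_Icc.2 ht₁.1.le)
              (Set.right_mem_Icc.2 ht₁.1.le) ht₁.1.le
            simp only [hx0, hθ0, mul_zero, add_zero] at h01
            -- h01 : 0 ≤ x t₁ + 2/(M*(R+1)) * θ t₁
            rw [hθt₁] at h01
            have h2 : 2/(M*(R+1)) * (π/4) = π/(2*M*(R+1)) := by
              field_simp; ring
            linarith only [h01, h2]
          · intro s hs
            have hsu : s ∈ Set.Icc 0 u := ⟨hs.1, le_trans hs.2 ht₁u⟩
            have hsI := huI hsu
            have hθs4 : -(π/4) ≤ θ s := by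
              rcases lt_or_eq_of_le hs.2 with h | h
              · exact (hmin₁ s ⟨hs.1, h⟩).le
              · rw [h, hθt₁]
            have hθ's := hθ'3 s hsI (hrlow s hsu) hθs4 (hx1 s hsu)
            have h1 : 2/(M*(R+1)) * (-(M*(R+1)/2) * Real.cos (θ s))
                ≤ 2/(M*(R+1)) * θ' s :=
              mul_le_mul_of_nonneg_left hθ's (by positivity)
            have h2 : 2/(M*(R+1)) * (-(M*(R+1)/2) * Real.cos (θ s))
                = -Real.cos (θ s) := by field_simp
            rw [h2] at h1
            linarith only [h1]
        -- on [tε, u], x is at least π/(4MR)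
        have hxlow : ∀ t ∈ Set.Icc tε u, π/(4*M*R) ≤ x t := by
          intro t ht
          have h1 : x t₁ ≤ x t := hxmono (huI ⟨ht₁.1.le, ht₁u⟩)
            (huI ⟨le_trans htε.1.le ht.1, ht.2⟩) (le_trans ht₁.2 ht.1)
          have h2 : π/(4*M*R) ≤ π/(2*M*(R+1)) := by
            rw [div_le_div_iff₀ (by positivity) (by positivity)]
            linarith only [mul_nonneg (mul_nonneg hπ.le hM.le)
              (by linarith only [hR1] : (0:ℝ) ≤ R - 1)]
          linarith only [h1, h2, hxt₁]
        -- linear comparison on [tε, u]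
        have hmono₃ := mono_of_deriv'
          (g := fun s => r s - 8*M*R/(m*π) * θ s)
          (g' := fun s => Real.sin (θ s) - 8*M*R/(m*π) * θ' s) (a := tε) (b := u)
          (fun s hs => (hrD s (hI (huI ⟨le_trans htε.1.le hs.1, hs.2⟩))).sub
            ((hθD s (hI (huI ⟨le_trans htε.1.le hs.1, hs.2⟩))).const_mul (8*M*R/(m*π))))
          ?_
        · have h01 := hmono₃ (Set.left_mem_Icc.2 htεu) (Set.right_mem_Icc.2 htεu) htεu
          -- h01 : r tε - K θ tε ≤ r u - K θ u
          have hθuge : -(π/2) ≤ θ u := hθge u (huI ⟨hu.1.le, le_rfl⟩)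
          have hδ : θ tε - θ u ≤ π/2 * (1/R^2) := by
            have hθtεge : -(π/2) ≤ θ tε := hθge tε (huI ⟨htε.1.le, htεu⟩)
            have hδ0 : 0 ≤ π/2 + θ tε := by linarith
            have hδπ : π/2 + θ tε ≤ π/2 := by linarith
            have hsinδ : Real.sin (π/2 + θ tε) = 1/R^2 := by
              rw [show π/2 + θ tε = π/2 - (-(θ tε)) by ring,
                Real.sin_pi_div_two_sub, Real.cos_neg, hcostε]
            have hJ := Real.mul_le_sin hδ0 hδπ
            rw [hsinδ] at hJ
            have hJ2 := mul_le_mul_of_nonneg_left hJ (by positivity : (0:ℝ) ≤ π/2)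
            have heq : π/2 * (2/π * (π/2 + θ tε)) = π/2 + θ tε := by
              field_simp
            linarith only [hJ2, heq, hθuge]
          have hKpos : (0:ℝ) ≤ 8*M*R/(m*π) := by positivity
          have hK1 : 8*M*R/(m*π) * (θ tε - θ u) ≤ 8*M*R/(m*π) * (π/2 * (1/R^2)) :=
            mul_le_mul_of_nonneg_left hδ hKpos
          have hK2 : 8*M*R/(m*π) * (π/2 * (1/R^2)) = 4*M/(m*R) := by
            field_simp; ring
          have hK3 : 4*M/(m*R) ≤ 1/2 := by
            rw [div_le_div_iff₀ (by positivity) (by norm_num)]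
            have h4 : m * (8*M/m) = 8*M := by field_simp
            linarith only [h4, mul_le_mul_of_nonneg_left hRM hm.le]
          refine ⟨hxb, ?_⟩
          linarith only [h01, hrtε, hK1, hK2, hK3]
        · intro s hs
          have hsu : s ∈ Set.Icc 0 u := ⟨le_trans htε.1.le hs.1, hs.2⟩
          have hsI := huI hsu
          have hθ's := hθ'2 s hsI (hrlow s hsu)
          have hS : 0 ≤ -Real.sin (θ s) := neg_nonneg.2 (hsin0 s hsI)
          have h1 : 8*M*R/(m*π) * θ' s
              ≤ 8*M*R/(m*π) * (x s / 2 * m * Real.sin (θ s)) :=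
            mul_le_mul_of_nonneg_left hθ's (by positivity)
          have heq : 8*M*R/(m*π) * (x s / 2 * m * Real.sin (θ s))
              = 4*M*R/π * x s * Real.sin (θ s) := by
            field_simp; ring
          rw [heq] at h1
          have hxs := hxlow s hs
          have h1m : (0:ℝ) ≤ 4*M*R/π * x s - 1 := by
            have h2 := mul_le_mul_of_nonneg_left hxs
              (by positivity : (0:ℝ) ≤ 4*M*R/π)
            have h3 : 4*M*R/π * (π/(4*M*R)) = 1 := by
              rw [← inv_div (4*M*R) π]
              exact mul_inv_cancel₀ (by positivity)
            linarith only [h2, h3]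
          have h4 : 4*M*R/π * x s * Real.sin (θ s) ≤ Real.sin (θ s) := by
            linarith only [mul_nonneg hS h1m]
          simp only [sub_nonneg]
          linarith only [h1, h4]
    -- bootstrap
    have hboot : ∀ t ∈ Set.Icc 0 tstar, R/2 ≤ r t := by
      by_contra hcon
      push_neg at hcon
      obtain ⟨a, ha, hra⟩ := hcon
      obtain ⟨t₀, ht₀, hrt₀, hmin⟩ := first_hit (g := r) (c := R - 2)
        (hcontr.mono hI) (by rw [hr0]; linarith)
        ⟨a, ha, by linarith⟩
      have hrlow : ∀ t ∈ Set.Icc 0 t₀, R/2 ≤ r t := by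
        intro t ht
        rcases lt_or_eq_of_le ht.2 with h | h
        · have := hmin t ⟨ht.1, h⟩; linarith
        · rw [h, hrt₀]; linarith
      have := (hcore t₀ ht₀ hrlow).2
      rw [hrt₀] at this; linarith
    obtain ⟨hxball, hrfin⟩ := hcore tstar ⟨htspos, le_rfl⟩ hboot
    constructor
    · have := hxball tstar ⟨htspos.le, le_rfl⟩
      rw [hC₂def, div_div]; exact this
    · exact hrfin
  refine ⟨C₂, R₀, hC₂, hR₀,
    fun R hR x r θ T ts h => (key R hR x r θ T ts h).1, fun K => ?_⟩
  refine ⟨max R₀ (K+1), le_max_left _ _, fun R hR x r θ T ts h => ?_⟩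
  have h1 := (key R (le_trans (le_max_left _ _) hR) x r θ T ts h).2
  have h2 : K + 1 ≤ R := le_trans (le_max_right _ _) hR
  linarith
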